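/- Let V and W be sets, I a finite set, and for each α ∈ I let X_α ⊆ V × W. Suppose X ⊆ V × W is obtained as a Boolean combination of the X_α, i.e., X belongs to the Boolean subalgebra of subsets of V × W generated by (X_α)_{α ∈ I}. Let W' = I × W (the disjoint union of card(I) copies of W) and let X' = {(v,(α,w)) ∈ V × W' : (v,w) ∈ X_α}. Then for every n > 0, 𝜒_{X,V,W}(n) ≤ 𝜒_{X',V,W'}(card(I)·n). -/
import Mathlib


open Set

/-- The 0/1 pattern (as an element of `Fin n → Prop`) realized by a point `v`
with respect to the fibers of `X` over the tuple `w`. -/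
def pattern {A B : Type*} (X : Set (A × B)) (v : A) {n : ℕ} (w : Fin n → B) :
    Fin n → Prop :=
  fun i => (v, w i) ∈ X

/-- The number of 0/1 patterns realized by points of `Vs` with respect to the
fibers of `X` over the tuple `w`. -/
noncomputable def patternCount {A B : Type*} (X : Set (A × B)) (Vs : Set A)
    {n : ℕ} (w : Fin n → B) : ℕ :=
  Set.ncard {σ : Fin n → Prop | ∃ v ∈ Vs, pattern X v w = σ}

/-- `𝜒_{X,Vs,Ws}(n)`: the maximal number of 0/1 patterns realized by points of
`Vs` over an `n`-tuple of elements of `Ws`. -/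
noncomputable def chi {A B : Type*} (X : Set (A × B)) (Vs : Set A) (Ws : Set B)
    (n : ℕ) : ℕ :=
  ⨆ w : Fin n → Ws, patternCount X Vs (fun i => (w i : B))

/-- Membership in the Boolean subalgebra of subsets of `S` generated by the
family `F`: the smallest collection containing the members of `F` and closed
under complement, finite union, and finite intersection. -/
inductive BooleanGen {S : Type*} (F : Set (Set S)) : Set S → Prop
  | basic {A : Set S} : A ∈ F → BooleanGen F A
  | empty : BooleanGen F ∅
  | compl {A : Set S} : BooleanGen F A → BooleanGen F Aᶜ
  | union {A B : Set S} : BooleanGen F A → BooleanGen F B → BooleanGen F (A ∪ B)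
  | inter {A B : Set S} : BooleanGen F A → BooleanGen F B → BooleanGen F (A ∩ B)

lemma boolean_inv {V W : Type*} {I : Type*} (Xa : I → Set (V × W)) {X : Set (V × W)}
    (hX : BooleanGen (Set.range Xa) X) (v v' : V) (w w' : W)
    (h : ∀ α, ((v, w) ∈ Xa α ↔ (v', w') ∈ Xa α)) :
    ((v, w) ∈ X ↔ (v', w') ∈ X) := by
  induction hX with
  | basic hA => obtain ⟨α, rfl⟩ := hA; exact h α
  | empty => simp
  | compl _ ih => simp [ih]
  | union _ _ ih1 ih2 => simp [Set.mem_union, ih1, ih2]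
  | inter _ _ ih1 ih2 => simp [Set.mem_inter_iff, ih1, ih2]

theorem stmt2 {V W : Type*} {I : Type*} [Fintype I]
    (Xa : I → Set (V × W)) (X : Set (V × W))
    (hX : BooleanGen (Set.range Xa) X)
    (X' : Set (V × (I × W)))
    (hX' : X' = {p : V × (I × W) | (p.1, p.2.2) ∈ Xa p.2.1})
    (n : ℕ) (hn : 0 < n) :
    chi X (Set.univ : Set V) (Set.univ : Set W) n ≤
      chi X' (Set.univ : Set V) (Set.univ : Set (I × W)) (Fintype.card I * n) := by
  subst hX'
  set N := Fintype.card I * n with hN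
  rcases isEmpty_or_nonempty (Fin n → (Set.univ : Set W)) with hE | hNE
  · rw [chi, ciSup_of_empty]; exact bot_le
  · rw [chi]
    apply ciSup_le
    intro w
    -- construct the big tuple
    let eI := Fintype.equivFin I
    let w' : Fin N → (Set.univ : Set (I × W)) :=
      fun k => ⟨(eI.symm (finProdFinEquiv.symm k).1, (w (finProdFinEquiv.symm k).2 : W)),
        mem_univ _⟩
    set X' : Set (V × (I × W)) := {p : V × (I × W) | (p.1, p.2.2) ∈ Xa p.2.1} with hX'def
    -- key: X'-pattern determines X-pattern
    have key : ∀ v v' : V,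
        pattern X' v (fun k => (w' k : I × W)) = pattern X' v' (fun k => (w' k : I × W)) →
        pattern X v (fun i => (w i : W)) = pattern X v' (fun i => (w i : W)) := by
      intro v v' hvv'
      funext i
      have hiff : ∀ α, ((v, (w i : W)) ∈ Xa α ↔ (v', (w i : W)) ∈ Xa α) := by
        intro α
        have hk := congrFun hvv' (finProdFinEquiv (eI α, i))
        simp only [pattern, w', Equiv.symm_apply_apply, Equiv.symm_apply_apply, hX'def,
          Set.mem_setOf_eq, Equiv.symm_apply_apply] at hk
        exact iff_of_eq hk
      exact propext (boolean_inv Xa hX v v' _ _ hiff)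
    -- the map from X'-patterns to X-patterns
    classical
    let F : (Fin N → Prop) → (Fin n → Prop) := fun τ =>
      if h : ∃ v : V, pattern X' v (fun k => (w' k : I × W)) = τ then
        pattern X h.choose (fun i => (w i : W))
      else fun _ => False
    have himg : {σ : Fin n → Prop | ∃ v ∈ (Set.univ : Set V),
          pattern X v (fun i => (w i : W)) = σ}
        = F '' {τ : Fin N → Prop | ∃ v ∈ (Set.univ : Set V),
          pattern X' v (fun k => (w' k : I × W)) = τ} := by
      ext σ
      constructor
      · rintro ⟨v, -, rfl⟩
        refine ⟨pattern X' v (fun k => (w' k : I × W)), ⟨v, mem_univ _, rfl⟩, ?_⟩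
        have h : ∃ u : V, pattern X' u (fun k => (w' k : I × W)) =
            pattern X' v (fun k => (w' k : I × W)) := ⟨v, rfl⟩
        simp only [F, dif_pos h]
        exact key _ _ h.choose_spec
      · rintro ⟨τ, ⟨v, -, rfl⟩, rfl⟩
        have h : ∃ u : V, pattern X' u (fun k => (w' k : I × W)) =
            pattern X' v (fun k => (w' k : I × W)) := ⟨v, rfl⟩
        simp only [F, dif_pos h]
        exact ⟨h.choose, mem_univ _, rfl⟩
    have h1 : patternCount X (Set.univ : Set V) (fun i => (w i : W)) ≤
        patternCount X' (Set.univ : Set V) (fun k => (w' k : I × W)) := by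
      rw [patternCount, patternCount, himg]
      exact Set.ncard_image_le (Set.toFinite _)
    refine h1.trans ?_
    rw [chi]
    have hbdd : BddAbove (Set.range fun (u : Fin N → (Set.univ : Set (I × W))) =>
        patternCount X' (Set.univ : Set V) (fun k => (u k : I × W))) := by
      refine ⟨Nat.card (Fin N → Prop), ?_⟩
      rintro x ⟨u, rfl⟩
      simp only [patternCount]
      rw [← Set.ncard_univ]
      exact Set.ncard_le_ncard (Set.subset_univ _) (Set.toFinite _)
    exact le_ciSup hbdd w'
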